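/- Let U ⊆ ℝⁿ be an open set and let f : ℝⁿ → ℝ be twice continuously differentiable on U with ∇f(x) ≠ 0 for all x ∈ U. Suppose there are a continuously differentiable F : ℝ → ℝ with F > 0 and a function G : ℝ → ℝ such that ‖∇f(x)‖² = F(f(x)) and Δf(x) = G(f(x)) for all x ∈ U. Then the mean curvature of the level sets satisfies div(∇f/‖∇f‖)(x) = H(f(x)) for all x ∈ U, where H(t) = G(t)/√(F(t)) − F'(t)/(2√(F(t))). -/

import Mathlib

open Set Metric

/-- The Laplacian of `f : ℝⁿ → ℝ` at `x`: the trace of the derivative of the gradient field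
(equivalently, the trace of the second derivative). -/
noncomputable def laplacian {n : ℕ} (f : EuclideanSpace ℝ (Fin n) → ℝ)
    (x : EuclideanSpace ℝ (Fin n)) : ℝ :=
  LinearMap.trace ℝ (EuclideanSpace ℝ (Fin n))
    ((fderiv ℝ (gradient f) x :
        EuclideanSpace ℝ (Fin n) →L[ℝ] EuclideanSpace ℝ (Fin n)) :
      EuclideanSpace ℝ (Fin n) →ₗ[ℝ] EuclideanSpace ℝ (Fin n))

/-- `g` is constant on the connected component of each point `x ∈ S` in the level set
`{y ∈ S | f y = f x}`. -/
def ConstOnFibreComponents {n : ℕ} (f g : EuclideanSpace ℝ (Fin n) → ℝ)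
    (S : Set (EuclideanSpace ℝ (Fin n))) : Prop :=
  ∀ x ∈ S, ∀ y ∈ connectedComponentIn {z | z ∈ S ∧ f z = f x} x, g y = g x

/-- The divergence of a vector field `V : ℝⁿ → ℝⁿ` at `x`: the trace of its Fréchet
derivative at `x`. -/
noncomputable def divergence {n : ℕ}
    (V : EuclideanSpace ℝ (Fin n) → EuclideanSpace ℝ (Fin n))
    (x : EuclideanSpace ℝ (Fin n)) : ℝ :=
  LinearMap.trace ℝ (EuclideanSpace ℝ (Fin n))
    ((fderiv ℝ V x :
        EuclideanSpace ℝ (Fin n) →L[ℝ] EuclideanSpace ℝ (Fin n)) :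
      EuclideanSpace ℝ (Fin n) →ₗ[ℝ] EuclideanSpace ℝ (Fin n))

lemma trace_smulRight' {E : Type*} [NormedAddCommGroup E] [NormedSpace ℝ E]
    [FiniteDimensional ℝ E] (L : E →L[ℝ] ℝ) (v : E) :
    LinearMap.trace ℝ E ((L.smulRight v : E →L[ℝ] E) : E →ₗ[ℝ] E) = L v := by
  have h : ((L.smulRight v : E →L[ℝ] E) : E →ₗ[ℝ] E) =
      (LinearMap.toSpanSingleton ℝ E v) ∘ₗ (L : E →ₗ[ℝ] ℝ) := by
    ext x; simp [LinearMap.toSpanSingleton, LinearMap.smulRight]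
  rw [h, LinearMap.trace_comp_comm']
  have h2 : ((L : E →ₗ[ℝ] ℝ) ∘ₗ LinearMap.toSpanSingleton ℝ E v) =
      (L v) • LinearMap.id := by
    ext; simp [LinearMap.toSpanSingleton, mul_comm]
  rw [h2, map_smul, LinearMap.trace_id]
  simp

/-- The identity `div(∇f/‖∇f‖) = Δf/‖∇f‖ − ⟨∇f, ∇‖∇f‖⟩/(∇f)²` in the isoparametric setting:
the regular level sets of an isoparametric function have (constant) mean curvature
`H(t) = G(t)/√F(t) − F'(t)/(2√F(t))`. -/
theorem statement12 {n : ℕ} (U : Set (EuclideanSpace ℝ (Fin n))) (hU : IsOpen U)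
    (f : EuclideanSpace ℝ (Fin n) → ℝ) (hf : ContDiffOn ℝ 2 f U)
    (hgrad : ∀ x ∈ U, gradient f x ≠ 0)
    (F : ℝ → ℝ) (hF : ContDiff ℝ 1 F) (hFpos : ∀ t, 0 < F t)
    (G : ℝ → ℝ)
    (hF2 : ∀ x ∈ U, ‖gradient f x‖ ^ 2 = F (f x))
    (hG : ∀ x ∈ U, laplacian f x = G (f x)) :
    ∀ x ∈ U, divergence (fun y => ‖gradient f y‖⁻¹ • gradient f y) x =
      G (f x) / Real.sqrt (F (f x)) - deriv F (f x) / (2 * Real.sqrt (F (f x))) := by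
  intro x hx
  have hxmem := hx
  set g := gradient f with hg
  set a := F (f x) with ha
  have ha0 : 0 < a := hFpos _
  have hsa : 0 < Real.sqrt a := Real.sqrt_pos.mpr ha0
  -- norm of gradient on U
  have hnorm : ∀ y ∈ U, ‖g y‖ = Real.sqrt (F (f y)) := by
    intro y hy
    rw [← hF2 y hy, Real.sqrt_sq (norm_nonneg _)]
  -- contDiffAt
  have hfx : ContDiffAt ℝ 2 f x := hf.contDiffAt (hU.mem_nhds hx)
  have hdf : DifferentiableAt ℝ f x := hfx.differentiableAt two_ne_zero
  -- gradient differentiable at x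
  have hfd : ContDiffAt ℝ 1 (fderiv ℝ f) x := hfx.fderiv_right (le_refl 2)
  have hdg : DifferentiableAt ℝ g x := by
    have : g = fun y => (InnerProductSpace.toDual ℝ (EuclideanSpace ℝ (Fin n))).symm (fderiv ℝ f y) := rfl
    rw [this]
    exact ((InnerProductSpace.toDual ℝ (EuclideanSpace ℝ (Fin n))).symm.toContinuousLinearEquiv.differentiableAt).comp x
      (hfd.differentiableAt one_ne_zero)
  -- scalar function c
  set c : EuclideanSpace ℝ (Fin n) → ℝ := fun y => (Real.sqrt (F (f y)))⁻¹ with hc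
  -- derivative of t ↦ (√(F t))⁻¹ at f x
  have hF' : HasDerivAt F (deriv F (f x)) (f x) :=
    ((hF.differentiable one_ne_zero) (f x)).hasDerivAt
  have hsqrt : HasDerivAt Real.sqrt (1 / (2 * Real.sqrt a)) a :=
    Real.hasDerivAt_sqrt (ne_of_gt ha0)
  have hφ : HasDerivAt (fun t => (Real.sqrt (F t))⁻¹)
      (-(1 / (2 * Real.sqrt a) * deriv F (f x)) / (Real.sqrt a) ^ 2) (f x) := by
    have h1 : HasDerivAt (fun t => Real.sqrt (F t))
        (1 / (2 * Real.sqrt a) * deriv F (f x)) (f x) := hsqrt.comp (f x) hF'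
    exact h1.inv (ne_of_gt hsa)
  set m : ℝ := -(1 / (2 * Real.sqrt a) * deriv F (f x)) / (Real.sqrt a) ^ 2
  have hcc : HasFDerivAt c (m • (fderiv ℝ f x)) x :=
    hφ.comp_hasFDerivAt x hdf.hasFDerivAt
  have hdc : DifferentiableAt ℝ c x := hcc.differentiableAt
  -- eventual equality of the vector field
  have heq : (fun y => ‖g y‖⁻¹ • g y) =ᶠ[nhds x] (fun y => c y • g y) := by
    filter_upwards [hU.mem_nhds hx] with y hy
    rw [hnorm y hy]
  -- compute fderiv
  have hfder : fderiv ℝ (fun y => ‖g y‖⁻¹ • g y) x =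
      c x • fderiv ℝ g x + (fderiv ℝ c x).smulRight (g x) := by
    rw [heq.fderiv_eq]
    exact fderiv_smul hdc hdg
  -- fderiv f x applied to g x
  have hinner : fderiv ℝ f x (g x) = a := by
    have : (inner ℝ (g x) (g x) : ℝ) = fderiv ℝ f x (g x) :=
      InnerProductSpace.toDual_symm_apply
    rw [← this, real_inner_self_eq_norm_sq, hF2 x hx]
  -- put it together
  rw [divergence, hfder]
  push_cast
  rw [map_add, map_smul, trace_smulRight', hcc.fderiv]
  have hlap := hG x hx
  unfold laplacian at hlap
  rw [smul_eq_mul, hlap]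
  simp only [ContinuousLinearMap.smul_apply, hinner, smul_eq_mul]
  have hcval : c x = (Real.sqrt a)⁻¹ := rfl
  rw [hcval]
  have hsq : Real.sqrt a ^ 2 = a := Real.sq_sqrt ha0.le
  have hsane : Real.sqrt a ≠ 0 := ne_of_gt hsa
  have hane : a ≠ 0 := ne_of_gt ha0
  have hm : m = -(1 / (2 * Real.sqrt a) * deriv F (f x)) / (Real.sqrt a) ^ 2 := rfl
  rw [hm, hsq]
  field_simp
  ring
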